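/- arXiv:2106.08312 — 2 statements merged into one kernel-verified Lean document; each statement's English description precedes it below -/
import Mathlib

section
/- Let V(t) ⊂ H(t) be the divergence-free subspaces of H¹₀(Ω(t);ℝ^d) ⊂ L²(Ω(t);ℝ^d), with Ω(t) = Φ_t(Ω₀) for the flow Φ_t of a smooth divergence-free compactly supported velocity field w. For u, v ∈ C¹_V (strongly materially differentiable curves), d/dt ∫_{Ω(t)} u(t)·v(t) = ∫_{Ω(t)} (∂•_φ u)·v + u·(∂•_φ v) + ∫_{Ω(t)} u · M(t)∘Φ_t⁻¹ · v, where M(t) := DΦ_t⁻ᵀ (d/dt(DΦ_tᵀ DΦ_t)) DΦ_t⁻¹ and ∂•_φ ξ := φ_t(d/dt(φ_{−t} ξ)) with φ_t the Piola transform. -/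
open Matrix Set MeasureTheory

noncomputable def pd {d : ℕ} (j : Fin d) (f : (Fin d → ℝ) → ℝ) (x : Fin d → ℝ) : ℝ :=
  fderiv ℝ f x (Pi.single j 1)

noncomputable def jacobian {d : ℕ} (Φ : (Fin d → ℝ) → (Fin d → ℝ)) (x : Fin d → ℝ) :
    Matrix (Fin d) (Fin d) ℝ :=
  Matrix.of fun i j => pd j (fun y => Φ y i) x

noncomputable def vdiv {d : ℕ} (u : (Fin d → ℝ) → (Fin d → ℝ)) (x : Fin d → ℝ) : ℝ :=
  ∑ i, pd i (fun y => u y i) x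

/-!
Since `det DΦ_s = 1`, the substitution `y = Φ_s x` turns `∫_{Ω(s)} u·v` into an integral over the
fixed domain `Ω₀` with integrand `ũ · (DΦ_sᵀ DΦ_s) ṽ`, where `ũ = DΦ_s⁻¹ (u ∘ Φ_s)` and
`ṽ = DΦ_s⁻¹ (v ∘ Φ_s)` are the Piola pull-backs, whose time derivatives are the material
derivatives. The integrands are jointly continuous, hence dominated on the compact closure of `Ω₀`,
so we may differentiate under the integral sign; the product rule gives three terms, and pushing
them forward to `Ω(t)` gives `∂•u · v + u · ∂•v` and the `M(t)` term.
-/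

open Filter Topology

lemma jacobian_eq_toMatrix' {d : ℕ} {f : (Fin d → ℝ) → (Fin d → ℝ)} {x : Fin d → ℝ}
    (hf : DifferentiableAt ℝ f x) :
    jacobian f x = LinearMap.toMatrix' (fderiv ℝ f x : (Fin d → ℝ) →ₗ[ℝ] (Fin d → ℝ)) := by
  ext i j
  simp [jacobian, pd, LinearMap.toMatrix'_apply, (hasFDerivAt_pi'.1 hf.hasFDerivAt i).fderiv]

lemma setIntegral_image_eq_of_det_jacobian_eq_one {d : ℕ} {E : Type*} [NormedAddCommGroup E]
    [NormedSpace ℝ E] {f : (Fin d → ℝ) → (Fin d → ℝ)} {s : Set (Fin d → ℝ)}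
    (hs : MeasurableSet s) (hf : ∀ x ∈ s, DifferentiableAt ℝ f x) (hinj : InjOn f s)
    (hdet : ∀ x ∈ s, (jacobian f x).det = 1) (g : (Fin d → ℝ) → E) :
    ∫ y in f '' s, g y = ∫ x in s, g (f x) := by
  rw [integral_image_eq_integral_abs_det_fderiv_smul volume hs
    (fun x hx => (hf x hx).hasFDerivAt.hasFDerivWithinAt) hinj g]
  refine setIntegral_congr_fun hs fun x hx => ?_
  have hdet' : (fderiv ℝ f x).det = 1 := by
    rw [← hdet x hx, jacobian_eq_toMatrix' (hf x hx), LinearMap.det_toMatrix']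
  rw [hdet', abs_one, one_smul]

lemma DifferentiableAt.hasDerivAt_comp_prodMk_left {E F : Type*} [NormedAddCommGroup E]
    [NormedSpace ℝ E] [NormedAddCommGroup F] [NormedSpace ℝ F] {g : ℝ × E → F} {s : ℝ} {x : E}
    (hg : DifferentiableAt ℝ g (s, x)) :
    HasDerivAt (fun r => g (r, x)) (fderiv ℝ g (s, x) (1, 0)) s :=
  hg.hasFDerivAt.comp_hasDerivAt s ((hasDerivAt_id s).prodMk (hasDerivAt_const s x))

lemma ContDiff.continuous_deriv_comp_prodMk_left {E F : Type*} [NormedAddCommGroup E]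
    [NormedSpace ℝ E] [NormedAddCommGroup F] [NormedSpace ℝ F] {g : ℝ × E → F}
    (hg : ContDiff ℝ 1 g) :
    Continuous fun p : ℝ × E => deriv (fun r => g (r, p.2)) p.1 := by
  have h : (fun p : ℝ × E => deriv (fun r => g (r, p.2)) p.1) = fun p => fderiv ℝ g p (1, 0) :=
    funext fun p => (hg.differentiable one_ne_zero p).hasDerivAt_comp_prodMk_left.deriv
  rw [h]
  exact (hg.continuous_fderiv one_ne_zero).clm_apply continuous_const

lemma contDiff_jacobian_apply {d : ℕ} {m n : WithTop ℕ∞} {Φ : ℝ → (Fin d → ℝ) → (Fin d → ℝ)}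
    (hΦ : ContDiff ℝ m fun p : ℝ × (Fin d → ℝ) => Φ p.1 p.2) (hmn : n + 1 ≤ m) (i j : Fin d) :
    ContDiff ℝ n fun p : ℝ × (Fin d → ℝ) => jacobian (Φ p.1) p.2 i j := by
  have hΦi : ContDiff ℝ m fun p : ℝ × (Fin d → ℝ) => Φ p.1 p.2 i := contDiff_pi.1 hΦ i
  have hm : m ≠ 0 := (zero_lt_one.trans_le (le_add_self.trans hmn)).ne'
  have h : (fun p : ℝ × (Fin d → ℝ) => jacobian (Φ p.1) p.2 i j)
      = fun p => fderiv ℝ (fun q : ℝ × (Fin d → ℝ) => Φ q.1 q.2 i) p (0, Pi.single j 1) := by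
    funext ⟨s, x⟩
    have hslice : HasFDerivAt (fun y => Φ s y i)
        ((fderiv ℝ (fun q : ℝ × (Fin d → ℝ) => Φ q.1 q.2 i) (s, x)).comp
          ((0 : (Fin d → ℝ) →L[ℝ] ℝ).prod (ContinuousLinearMap.id ℝ _))) x :=
      (hΦi.differentiable hm (s, x)).hasFDerivAt.comp x
        ((hasFDerivAt_const s x).prodMk (hasFDerivAt_id x))
    simp [jacobian, pd, hslice.fderiv]
  rw [h]
  exact (hΦi.fderiv_right hmn).clm_apply contDiff_const

lemma Matrix.mulVec_dotProduct_mulVec {ι : Type*} [Fintype ι] (A : Matrix ι ι ℝ) (x y : ι → ℝ) :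
    (A *ᵥ x) ⬝ᵥ (A *ᵥ y) = x ⬝ᵥ ((Aᵀ * A) *ᵥ y) := by
  rw [← mulVec_mulVec, dotProduct_mulVec x, vecMul_transpose]

lemma Matrix.dotProduct_transpose_mul_mul_mulVec {ι : Type*} [Fintype ι] (B G : Matrix ι ι ℝ)
    (x y : ι → ℝ) : x ⬝ᵥ ((Bᵀ * G * B) *ᵥ y) = (B *ᵥ x) ⬝ᵥ (G *ᵥ (B *ᵥ y)) := by
  rw [← mulVec_mulVec, ← mulVec_mulVec, dotProduct_mulVec x, vecMul_transpose]

lemma Matrix.dotProduct_eq_inv_mulVec_dotProduct {ι : Type*} [Fintype ι] [DecidableEq ι]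
    {A : Matrix ι ι ℝ} (hA : IsUnit A.det) (x y : ι → ℝ) :
    x ⬝ᵥ y = (A⁻¹ *ᵥ x) ⬝ᵥ ((Aᵀ * A) *ᵥ (A⁻¹ *ᵥ y)) := by
  rw [← mulVec_dotProduct_mulVec]
  simp only [mulVec_mulVec, mul_nonsing_inv _ hA, one_mulVec]

lemma Matrix.mulVec_dotProduct_add_dotProduct_mulVec {ι : Type*} [Fintype ι] [DecidableEq ι]
    {A : Matrix ι ι ℝ} (hA : IsUnit A.det) (x y x' y' : ι → ℝ) :
    (A *ᵥ x') ⬝ᵥ y + x ⬝ᵥ (A *ᵥ y')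
      = x' ⬝ᵥ ((Aᵀ * A) *ᵥ (A⁻¹ *ᵥ y)) + (A⁻¹ *ᵥ x) ⬝ᵥ ((Aᵀ * A) *ᵥ y') := by
  have hx : x = A *ᵥ (A⁻¹ *ᵥ x) := by rw [mulVec_mulVec, mul_nonsing_inv _ hA, one_mulVec]
  have hy : y = A *ᵥ (A⁻¹ *ᵥ y) := by rw [mulVec_mulVec, mul_nonsing_inv _ hA, one_mulVec]
  conv_lhs => rw [hx, hy]
  rw [mulVec_dotProduct_mulVec, mulVec_dotProduct_mulVec]

lemma HasDerivAt.dotProduct_mulVec {ι : Type*} [Fintype ι] {a b : ℝ → ι → ℝ}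
    {M : ℝ → Matrix ι ι ℝ} {a' b' : ι → ℝ} {M' : Matrix ι ι ℝ} {t : ℝ}
    (ha : HasDerivAt a a' t) (hM : ∀ i j, HasDerivAt (fun s => M s i j) (M' i j) t)
    (hb : HasDerivAt b b' t) :
    HasDerivAt (fun s => a s ⬝ᵥ (M s *ᵥ b s))
      (a' ⬝ᵥ (M t *ᵥ b t) + a t ⬝ᵥ (M t *ᵥ b') + a t ⬝ᵥ (M' *ᵥ b t)) t := by
  have hMb : ∀ i, HasDerivAt (fun s => (M s *ᵥ b s) i) ((M' *ᵥ b t) i + (M t *ᵥ b') i) t := by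
    intro i
    simp only [mulVec, dotProduct, ← Finset.sum_add_distrib]
    exact HasDerivAt.fun_sum fun j _ => (hM i j).fun_mul (hasDerivAt_pi.1 hb j)
  refine (HasDerivAt.fun_sum (u := Finset.univ) fun i _ =>
    (hasDerivAt_pi.1 ha i).fun_mul (hMb i)).congr_deriv ?_
  simp only [dotProduct, mul_add, ← Finset.sum_add_distrib]
  exact Finset.sum_congr rfl fun i _ => by ring

lemma Continuous.integrableOn_of_isBounded {X E : Type*} [MetricSpace X] [ProperSpace X]
    [MeasurableSpace X] [OpensMeasurableSpace X] {μ : Measure X} [IsFiniteMeasureOnCompacts μ]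
    [NormedAddCommGroup E] {f : X → E} {s : Set X} (hf : Continuous f)
    (hs : Bornology.IsBounded s) :
    IntegrableOn f s μ :=
  (hf.locallyIntegrable.integrableOn_isCompact hs.isCompact_closure).mono_set subset_closure

lemma hasDerivAt_setIntegral_of_continuous {X E : Type*} [MetricSpace X] [ProperSpace X]
    [MeasurableSpace X] [OpensMeasurableSpace X] {μ : Measure X} [IsFiniteMeasureOnCompacts μ]
    [NormedAddCommGroup E] [NormedSpace ℝ E] [CompleteSpace E] {s : Set X} (hs : MeasurableSet s)
    (hb : Bornology.IsBounded s) {F F' : ℝ × X → E} {t : ℝ}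
    (hF : Continuous F) (hF' : Continuous F')
    (hderiv : ∀ᶠ r in 𝓝 t, ∀ x ∈ s, HasDerivAt (fun r => F (r, x)) (F' (r, x)) r) :
    HasDerivAt (fun r => ∫ x in s, F (r, x) ∂μ) (∫ x in s, F' (t, x) ∂μ) t := by
  obtain ⟨ε, hε, hball⟩ := Metric.eventually_nhds_iff_ball.1 hderiv
  obtain ⟨C, hC⟩ := (isCompact_closedBall t ε |>.prod
    hb.isCompact_closure).exists_bound_of_continuousOn hF'.continuousOn
  refine (hasDerivAt_integral_of_dominated_loc_of_deriv_le (F := fun r x => F (r, x))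
    (F' := fun r x => F' (r, x)) (bound := fun _ => C)
    (Metric.ball_mem_nhds t hε)
    (Eventually.of_forall fun r => (hF.comp (Continuous.prodMk_right r)).aestronglyMeasurable)
    ((hF.comp (Continuous.prodMk_right t)).integrableOn_of_isBounded hb)
    (hF'.comp (Continuous.prodMk_right t)).aestronglyMeasurable ?_
    (integrableOn_const (hb.measure_lt_top).ne) ?_).2
  · exact ae_restrict_of_forall_mem hs fun x hx r hr =>
      hC (r, x) ⟨Metric.ball_subset_closedBall hr, subset_closure hx⟩
  · exact ae_restrict_of_forall_mem hs fun x hx r hr => hball r hr x hx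

section PiolaFlow

variable {d : ℕ} {Φ : ℝ → (Fin d → ℝ) → (Fin d → ℝ)} {u v : ℝ → (Fin d → ℝ) → (Fin d → ℝ)}

/-- The inverse Piola transform `det DΦ_s · DΦ_s⁻¹ (u_s ∘ Φ_s)`, written with the adjugate: it is
the paper's `φ_{-s} u` where `det DΦ_s = 1`, and it is continuous wherever `DΦ` is. -/
noncomputable def piolaPullback (Φ u : ℝ → (Fin d → ℝ) → (Fin d → ℝ)) (p : ℝ × (Fin d → ℝ)) :
    Fin d → ℝ :=
  (jacobian (Φ p.1) p.2).adjugate *ᵥ u p.1 (Φ p.1 p.2)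

noncomputable def jacobianGram (Φ : ℝ → (Fin d → ℝ) → (Fin d → ℝ)) (p : ℝ × (Fin d → ℝ)) :
    Matrix (Fin d) (Fin d) ℝ :=
  (jacobian (Φ p.1) p.2)ᵀ * jacobian (Φ p.1) p.2

noncomputable def jacobianGramDeriv (Φ : ℝ → (Fin d → ℝ) → (Fin d → ℝ)) (p : ℝ × (Fin d → ℝ)) :
    Matrix (Fin d) (Fin d) ℝ :=
  Matrix.of fun i j => deriv (fun r => jacobianGram Φ (r, p.2) i j) p.1

noncomputable def pulledBackPairing (Φ u v : ℝ → (Fin d → ℝ) → (Fin d → ℝ))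
    (p : ℝ × (Fin d → ℝ)) : ℝ :=
  piolaPullback Φ u p ⬝ᵥ (jacobianGram Φ p *ᵥ piolaPullback Φ v p)

noncomputable def materialDerivTerm (Φ u v U' V' : ℝ → (Fin d → ℝ) → (Fin d → ℝ))
    (p : ℝ × (Fin d → ℝ)) : ℝ :=
  U' p.1 p.2 ⬝ᵥ (jacobianGram Φ p *ᵥ piolaPullback Φ v p)
    + piolaPullback Φ u p ⬝ᵥ (jacobianGram Φ p *ᵥ V' p.1 p.2)

noncomputable def deformationTerm (Φ u v : ℝ → (Fin d → ℝ) → (Fin d → ℝ))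
    (p : ℝ × (Fin d → ℝ)) : ℝ :=
  piolaPullback Φ u p ⬝ᵥ (jacobianGramDeriv Φ p *ᵥ piolaPullback Φ v p)

lemma continuous_jacobian {m : WithTop ℕ∞} (hΦ : ContDiff ℝ m fun p : ℝ × (Fin d → ℝ) => Φ p.1 p.2)
    (hm : 1 ≤ m) : Continuous fun p : ℝ × (Fin d → ℝ) => jacobian (Φ p.1) p.2 :=
  continuous_matrix fun i j =>
    (contDiff_jacobian_apply (n := 0) hΦ (by simpa using hm) i j).continuous

lemma continuous_piolaPullback {m : WithTop ℕ∞}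
    (hΦ : ContDiff ℝ m fun p : ℝ × (Fin d → ℝ) => Φ p.1 p.2) (hm : 1 ≤ m)
    (hu : Continuous fun p : ℝ × (Fin d → ℝ) => u p.1 p.2) : Continuous (piolaPullback Φ u) :=
  (continuous_jacobian hΦ hm).matrix_adjugate.matrix_mulVec
    (hu.comp (continuous_fst.prodMk hΦ.continuous))

lemma continuous_jacobianGram {m : WithTop ℕ∞}
    (hΦ : ContDiff ℝ m fun p : ℝ × (Fin d → ℝ) => Φ p.1 p.2) (hm : 1 ≤ m) :
    Continuous (jacobianGram Φ) :=
  (continuous_jacobian hΦ hm).matrix_transpose.matrix_mul (continuous_jacobian hΦ hm)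

lemma contDiff_jacobianGram_apply {m n : WithTop ℕ∞}
    (hΦ : ContDiff ℝ m fun p : ℝ × (Fin d → ℝ) => Φ p.1 p.2) (hmn : n + 1 ≤ m) (i j : Fin d) :
    ContDiff ℝ n fun p => jacobianGram Φ p i j := by
  simp only [jacobianGram, mul_apply, transpose_apply]
  exact ContDiff.sum fun k _ =>
    (contDiff_jacobian_apply hΦ hmn k i).mul (contDiff_jacobian_apply hΦ hmn k j)

lemma hasDerivAt_jacobianGram_apply (hΦ : ContDiff ℝ 2 fun p : ℝ × (Fin d → ℝ) => Φ p.1 p.2)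
    (s : ℝ) (x : Fin d → ℝ) (i j : Fin d) :
    HasDerivAt (fun r => jacobianGram Φ (r, x) i j) (jacobianGramDeriv Φ (s, x) i j) s :=
  ((contDiff_jacobianGram_apply hΦ le_rfl i j).differentiable one_ne_zero
    (s, x)).hasDerivAt_comp_prodMk_left.differentiableAt.hasDerivAt

lemma continuous_jacobianGramDeriv (hΦ : ContDiff ℝ 2 fun p : ℝ × (Fin d → ℝ) => Φ p.1 p.2) :
    Continuous (jacobianGramDeriv Φ) :=
  continuous_matrix fun i j =>
    (contDiff_jacobianGram_apply hΦ le_rfl i j).continuous_deriv_comp_prodMk_left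

lemma continuous_pulledBackPairing (hΦ : ContDiff ℝ 2 fun p : ℝ × (Fin d → ℝ) => Φ p.1 p.2)
    (hu : Continuous fun p : ℝ × (Fin d → ℝ) => u p.1 p.2)
    (hv : Continuous fun p : ℝ × (Fin d → ℝ) => v p.1 p.2) :
    Continuous (pulledBackPairing Φ u v) :=
  (continuous_piolaPullback hΦ one_le_two hu).dotProduct
    ((continuous_jacobianGram hΦ one_le_two).matrix_mulVec
      (continuous_piolaPullback hΦ one_le_two hv))

lemma piolaPullback_eq_inv_mulVec {s : ℝ} {x : Fin d → ℝ} (h : (jacobian (Φ s) x).det = 1) :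
    piolaPullback Φ u (s, x) = (jacobian (Φ s) x)⁻¹ *ᵥ u s (Φ s x) := by
  rw [piolaPullback, inv_def, h, Ring.inverse_one, one_smul]

lemma dotProduct_eq_pulledBackPairing {s : ℝ} {x : Fin d → ℝ} (h : (jacobian (Φ s) x).det = 1) :
    u s (Φ s x) ⬝ᵥ v s (Φ s x) = pulledBackPairing Φ u v (s, x) := by
  rw [pulledBackPairing, piolaPullback_eq_inv_mulVec h, piolaPullback_eq_inv_mulVec h]
  exact dotProduct_eq_inv_mulVec_dotProduct (h ▸ isUnit_one) _ _

lemma hasDerivAt_piolaPullback {s : ℝ} {x : Fin d → ℝ} {U : Fin d → ℝ}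
    (hdet : ∀ᶠ r in 𝓝 s, (jacobian (Φ r) x).det = 1)
    (hu : HasDerivAt (fun r => (jacobian (Φ r) x)⁻¹ *ᵥ u r (Φ r x)) U s) :
    HasDerivAt (fun r => piolaPullback Φ u (r, x)) U s :=
  hu.congr_of_eventuallyEq (hdet.mono fun _ hr => piolaPullback_eq_inv_mulVec hr)

lemma continuous_materialDerivTerm {U' V' : ℝ → (Fin d → ℝ) → (Fin d → ℝ)}
    (hΦ : ContDiff ℝ 2 fun p : ℝ × (Fin d → ℝ) => Φ p.1 p.2)
    (hu : Continuous fun p : ℝ × (Fin d → ℝ) => u p.1 p.2)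
    (hv : Continuous fun p : ℝ × (Fin d → ℝ) => v p.1 p.2)
    (hU' : Continuous fun p : ℝ × (Fin d → ℝ) => U' p.1 p.2)
    (hV' : Continuous fun p : ℝ × (Fin d → ℝ) => V' p.1 p.2) :
    Continuous (materialDerivTerm Φ u v U' V') :=
  (hU'.dotProduct ((continuous_jacobianGram hΦ one_le_two).matrix_mulVec
      (continuous_piolaPullback hΦ one_le_two hv))).add
    ((continuous_piolaPullback hΦ one_le_two hu).dotProduct
      ((continuous_jacobianGram hΦ one_le_two).matrix_mulVec hV'))

lemma continuous_deformationTerm (hΦ : ContDiff ℝ 2 fun p : ℝ × (Fin d → ℝ) => Φ p.1 p.2)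
    (hu : Continuous fun p : ℝ × (Fin d → ℝ) => u p.1 p.2)
    (hv : Continuous fun p : ℝ × (Fin d → ℝ) => v p.1 p.2) :
    Continuous (deformationTerm Φ u v) :=
  (continuous_piolaPullback hΦ one_le_two hu).dotProduct
    ((continuous_jacobianGramDeriv hΦ).matrix_mulVec (continuous_piolaPullback hΦ one_le_two hv))

lemma hasDerivAt_pulledBackPairing {U' V' : ℝ → (Fin d → ℝ) → (Fin d → ℝ)}
    (hΦ : ContDiff ℝ 2 fun p : ℝ × (Fin d → ℝ) => Φ p.1 p.2) {s : ℝ} {x : Fin d → ℝ}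
    (hdet : ∀ᶠ r in 𝓝 s, (jacobian (Φ r) x).det = 1)
    (hU' : HasDerivAt (fun r => (jacobian (Φ r) x)⁻¹ *ᵥ u r (Φ r x)) (U' s x) s)
    (hV' : HasDerivAt (fun r => (jacobian (Φ r) x)⁻¹ *ᵥ v r (Φ r x)) (V' s x) s) :
    HasDerivAt (fun r => pulledBackPairing Φ u v (r, x))
      (materialDerivTerm Φ u v U' V' (s, x) + deformationTerm Φ u v (s, x)) s :=
  (hasDerivAt_piolaPullback hdet hU').dotProduct_mulVec (hasDerivAt_jacobianGram_apply hΦ s x)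
    (hasDerivAt_piolaPullback hdet hV')

lemma jacobian_mulVec_dotProduct_add_dotProduct {s : ℝ} {x : Fin d → ℝ}
    (h : (jacobian (Φ s) x).det = 1) (U V : Fin d → ℝ) :
    (jacobian (Φ s) x *ᵥ U) ⬝ᵥ v s (Φ s x) + u s (Φ s x) ⬝ᵥ (jacobian (Φ s) x *ᵥ V)
      = U ⬝ᵥ (jacobianGram Φ (s, x) *ᵥ piolaPullback Φ v (s, x))
        + piolaPullback Φ u (s, x) ⬝ᵥ (jacobianGram Φ (s, x) *ᵥ V) := by
  rw [piolaPullback_eq_inv_mulVec h, piolaPullback_eq_inv_mulVec h]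
  exact mulVec_dotProduct_add_dotProduct_mulVec (h ▸ isUnit_one) _ _ _ _

lemma dotProduct_inv_transpose_mul_mul_inv_mulVec {s : ℝ} {x : Fin d → ℝ}
    (h : (jacobian (Φ s) x).det = 1) (G : Matrix (Fin d) (Fin d) ℝ) :
    u s (Φ s x) ⬝ᵥ (((jacobian (Φ s) x)⁻¹ᵀ * G * (jacobian (Φ s) x)⁻¹) *ᵥ v s (Φ s x))
      = piolaPullback Φ u (s, x) ⬝ᵥ (G *ᵥ piolaPullback Φ v (s, x)) := by
  rw [piolaPullback_eq_inv_mulVec h, piolaPullback_eq_inv_mulVec h]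
  exact dotProduct_transpose_mul_mul_mulVec _ _ _ _

lemma setIntegral_image_dotProduct_eq_pulledBackPairing {Ω₀ : Set (Fin d → ℝ)} {s : ℝ}
    (hΩ₀ : MeasurableSet Ω₀) (hΦ : ∀ x ∈ Ω₀, DifferentiableAt ℝ (Φ s) x) (hinj : InjOn (Φ s) Ω₀)
    (hdet : ∀ x ∈ Ω₀, (jacobian (Φ s) x).det = 1) :
    ∫ y in Φ s '' Ω₀, u s y ⬝ᵥ v s y = ∫ x in Ω₀, pulledBackPairing Φ u v (s, x) := by
  rw [setIntegral_image_eq_of_det_jacobian_eq_one hΩ₀ hΦ hinj hdet]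
  exact setIntegral_congr_fun hΩ₀ fun x hx => dotProduct_eq_pulledBackPairing (hdet x hx)

lemma setIntegral_materialDerivTerm_add_deformationTerm {Ω₀ : Set (Fin d → ℝ)} {t : ℝ}
    {Ψ : (Fin d → ℝ) → (Fin d → ℝ)} {U' V' : ℝ → (Fin d → ℝ) → (Fin d → ℝ)}
    {G : (Fin d → ℝ) → Matrix (Fin d) (Fin d) ℝ} (hΩ₀ : MeasurableSet Ω₀)
    (hb : Bornology.IsBounded Ω₀) (hΦ : ∀ x ∈ Ω₀, DifferentiableAt ℝ (Φ t) x)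
    (hΨ : LeftInvOn Ψ (Φ t) Ω₀) (hdet : ∀ x ∈ Ω₀, (jacobian (Φ t) x).det = 1)
    (hM : Continuous (materialDerivTerm Φ u v U' V')) (hD : Continuous (deformationTerm Φ u v))
    (hG : ∀ x ∈ Ω₀, G x = jacobianGramDeriv Φ (t, x)) :
    ∫ x in Ω₀, (materialDerivTerm Φ u v U' V' (t, x) + deformationTerm Φ u v (t, x))
      = (∫ y in Φ t '' Ω₀, ∑ i, ((jacobian (Φ t) (Ψ y) *ᵥ U' t (Ψ y)) i * v t y i
          + u t y i * (jacobian (Φ t) (Ψ y) *ᵥ V' t (Ψ y)) i))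
        + ∫ y in Φ t '' Ω₀,
          u t y ⬝ᵥ (((jacobian (Φ t) (Ψ y))⁻¹ᵀ * G (Ψ y) * (jacobian (Φ t) (Ψ y))⁻¹) *ᵥ v t y) := by
  have hint : ∀ {F : ℝ × (Fin d → ℝ) → ℝ}, Continuous F → IntegrableOn (fun x => F (t, x)) Ω₀ :=
    fun hF => (hF.comp (Continuous.prodMk_right t)).integrableOn_of_isBounded hb
  have hcov := setIntegral_image_eq_of_det_jacobian_eq_one (E := ℝ) hΩ₀ hΦ hΨ.injOn hdet
  rw [integral_add (hint hM) (hint hD), hcov, hcov]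
  congr 1 <;> refine setIntegral_congr_fun hΩ₀ fun x hx => ?_ <;> simp only [hΨ hx]
  · rw [Finset.sum_add_distrib]
    exact (jacobian_mulVec_dotProduct_add_dotProduct (hdet x hx) _ _).symm
  · rw [hG x hx]
    exact (dotProduct_inv_transpose_mul_mul_inv_mulVec (hdet x hx) _).symm

end PiolaFlow

theorem transport_theorem_general {d : ℕ} (T : ℝ)
    (Ω₀ : Set (Fin d → ℝ)) (hΩ₀ : IsOpen Ω₀) (hb₀ : Bornology.IsBounded Ω₀)
    (Φ Ψ : ℝ → (Fin d → ℝ) → (Fin d → ℝ))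
    (hΨΦ : ∀ t ∈ Icc (0:ℝ) T, ∀ x ∈ Ω₀, Ψ t (Φ t x) = x)
    (hΦreg : ContDiff ℝ 2 (fun p : ℝ × (Fin d → ℝ) => Φ p.1 p.2))
    (hdet : ∀ t ∈ Icc (0:ℝ) T, ∀ x ∈ Ω₀, (jacobian (Φ t) x).det = 1)
    -- u, v are divergence free and strongly materially differentiable, with Piola
    -- material derivatives given (on Ω₀-coordinates) by U' and V':
    (u v U' V' : ℝ → (Fin d → ℝ) → (Fin d → ℝ))
    (hU' : ∀ t ∈ Icc (0:ℝ) T, ∀ x ∈ Ω₀,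
      HasDerivAt (fun s => (jacobian (Φ s) x)⁻¹ *ᵥ (u s (Φ s x))) (U' t x) t)
    (hV' : ∀ t ∈ Icc (0:ℝ) T, ∀ x ∈ Ω₀,
      HasDerivAt (fun s => (jacobian (Φ s) x)⁻¹ *ᵥ (v s (Φ s x))) (V' t x) t)
    (hcont : Continuous (fun p : ℝ × (Fin d → ℝ) => (u p.1 p.2, v p.1 p.2, U' p.1 p.2, V' p.1 p.2)))
    -- G' is the time derivative of the Gram matrix DΦ_tᵀ DΦ_t:
    (G' : ℝ → (Fin d → ℝ) → Matrix (Fin d) (Fin d) ℝ)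
    (hG' : ∀ t ∈ Icc (0:ℝ) T, ∀ x ∈ Ω₀, ∀ i j,
      HasDerivAt (fun s => ((jacobian (Φ s) x)ᵀ * jacobian (Φ s) x) i j) (G' t x i j) t) :
    ∀ t ∈ Ioo (0:ℝ) T,
      HasDerivAt (fun s => ∫ y in Φ s '' Ω₀, ∑ i, u s y i * v s y i)
        ((∫ y in Φ t '' Ω₀, ∑ i,
            (((jacobian (Φ t) (Ψ t y)) *ᵥ (U' t (Ψ t y))) i * v t y i
              + u t y i * ((jacobian (Φ t) (Ψ t y)) *ᵥ (V' t (Ψ t y))) i))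
          + ∫ y in Φ t '' Ω₀, ∑ i, u t y i *
              (((((jacobian (Φ t) (Ψ t y))⁻¹)ᵀ * G' t (Ψ t y) * (jacobian (Φ t) (Ψ t y))⁻¹)
                *ᵥ (v t y)) i)) t := by
  intro t ht
  have hIcc : Ioo (0:ℝ) T ⊆ Icc 0 T := Ioo_subset_Icc_self
  have hΦs : ∀ s, Differentiable ℝ (Φ s) := fun s =>
    (hΦreg.comp (contDiff_const.prodMk contDiff_id)).differentiable two_ne_zero
  have hderiv : ∀ᶠ r in 𝓝 t, ∀ x ∈ Ω₀, HasDerivAt (fun s => pulledBackPairing Φ u v (s, x))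
      (materialDerivTerm Φ u v U' V' (r, x) + deformationTerm Φ u v (r, x)) r := by
    filter_upwards [Ioo_mem_nhds ht.1 ht.2] with r hr x hx
    have hdet_near : ∀ᶠ s in 𝓝 r, (jacobian (Φ s) x).det = 1 := by
      filter_upwards [Ioo_mem_nhds hr.1 hr.2] with s hs using hdet s (hIcc hs) x hx
    exact hasDerivAt_pulledBackPairing hΦreg hdet_near (hU' r (hIcc hr) x hx) (hV' r (hIcc hr) x hx)
  have hM := continuous_materialDerivTerm hΦreg hcont.fst hcont.snd.fst hcont.snd.snd.fst
    hcont.snd.snd.snd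
  have hD := continuous_deformationTerm hΦreg hcont.fst hcont.snd.fst
  refine ((hasDerivAt_setIntegral_of_continuous (μ := volume) hΩ₀.measurableSet hb₀
    (continuous_pulledBackPairing hΦreg hcont.fst hcont.snd.fst) (hM.add hD)
    hderiv).congr_of_eventuallyEq ?_).congr_deriv ?_
  · filter_upwards [Ioo_mem_nhds ht.1 ht.2] with s hs
    exact setIntegral_image_dotProduct_eq_pulledBackPairing hΩ₀.measurableSet
      (fun x _ => hΦs s x) (show LeftInvOn (Ψ s) (Φ s) Ω₀ from hΨΦ s (hIcc hs)).injOn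
      (hdet s (hIcc hs))
  · exact setIntegral_materialDerivTerm_add_deformationTerm hΩ₀.measurableSet hb₀
      (fun x _ => hΦs t x) (hΨΦ t (hIcc ht)) (hdet t (hIcc ht)) hM hD fun x hx =>
        Matrix.ext fun i j =>
          (hG' t (hIcc ht) x hx i j).unique (hasDerivAt_jacobianGram_apply hΦreg t x i j)

/-- transport theorem for the Piola material derivative: for materially C¹
curves u, v of divergence-free fields on the moving domain Ω(t) = Φ_t(Ω₀),
d/dt ∫ u·v = ∫ ∂•_φu·v + u·∂•_φv + ∫ u·(M∘Φ_t⁻¹)v where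
M(t) = DΦ_t⁻ᵀ (d/dt(DΦ_tᵀ DΦ_t)) DΦ_t⁻¹. -/
theorem transport_theorem {d : ℕ} (T : ℝ) (hT : 0 < T)
    (Ω₀ : Set (Fin d → ℝ)) (hΩ₀ : IsOpen Ω₀) (hb₀ : Bornology.IsBounded Ω₀)
    (Φ Ψ : ℝ → (Fin d → ℝ) → (Fin d → ℝ))
    (hΦ0 : ∀ x ∈ Ω₀, Φ 0 x = x)
    (hΨΦ : ∀ t ∈ Icc (0:ℝ) T, ∀ x ∈ Ω₀, Ψ t (Φ t x) = x)
    (hΦΨ : ∀ t ∈ Icc (0:ℝ) T, ∀ y ∈ Φ t '' Ω₀, Φ t (Ψ t y) = y)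
    (hΦreg : ContDiff ℝ 2 (fun p : ℝ × (Fin d → ℝ) => Φ p.1 p.2))
    (hΨreg : ContDiff ℝ 2 (fun p : ℝ × (Fin d → ℝ) => Ψ p.1 p.2))
    (hdet : ∀ t ∈ Icc (0:ℝ) T, ∀ x ∈ Ω₀, (jacobian (Φ t) x).det = 1)
    -- u, v are divergence free and strongly materially differentiable, with Piola
    -- material derivatives given (on Ω₀-coordinates) by U' and V':
    (u v U' V' : ℝ → (Fin d → ℝ) → (Fin d → ℝ))
    (hudiv : ∀ t ∈ Icc (0:ℝ) T, ∀ y ∈ Φ t '' Ω₀, vdiv (u t) y = 0 ∧ vdiv (v t) y = 0)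
    (hU' : ∀ t ∈ Icc (0:ℝ) T, ∀ x ∈ Ω₀,
      HasDerivAt (fun s => (jacobian (Φ s) x)⁻¹ *ᵥ (u s (Φ s x))) (U' t x) t)
    (hV' : ∀ t ∈ Icc (0:ℝ) T, ∀ x ∈ Ω₀,
      HasDerivAt (fun s => (jacobian (Φ s) x)⁻¹ *ᵥ (v s (Φ s x))) (V' t x) t)
    (hcont : Continuous (fun p : ℝ × (Fin d → ℝ) => (u p.1 p.2, v p.1 p.2, U' p.1 p.2, V' p.1 p.2)))
    -- G' is the time derivative of the Gram matrix DΦ_tᵀ DΦ_t: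
    (G' : ℝ → (Fin d → ℝ) → Matrix (Fin d) (Fin d) ℝ)
    (hG' : ∀ t ∈ Icc (0:ℝ) T, ∀ x ∈ Ω₀, ∀ i j,
      HasDerivAt (fun s => ((jacobian (Φ s) x)ᵀ * jacobian (Φ s) x) i j) (G' t x i j) t) :
    ∀ t ∈ Ioo (0:ℝ) T,
      HasDerivAt (fun s => ∫ y in Φ s '' Ω₀, ∑ i, u s y i * v s y i)
        ((∫ y in Φ t '' Ω₀, ∑ i,
            (((jacobian (Φ t) (Ψ t y)) *ᵥ (U' t (Ψ t y))) i * v t y i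
              + u t y i * ((jacobian (Φ t) (Ψ t y)) *ᵥ (V' t (Ψ t y))) i))
          + ∫ y in Φ t '' Ω₀, ∑ i, u t y i *
              (((((jacobian (Φ t) (Ψ t y))⁻¹)ᵀ * G' t (Ψ t y) * (jacobian (Φ t) (Ψ t y))⁻¹)
                *ᵥ (v t y)) i)) t :=
  transport_theorem_general T Ω₀ hΩ₀ hb₀ Φ Ψ hΨΦ hΦreg hdet u v U' V' hU' hV' hcont G' hG'
end

section
/- Let Φ_t be a C¹ family of diffeomorphisms with Φ₀ = Id. For smooth η(t) : Ω₀ → ℝ^d, the strong Piola material derivative of the pushforward test function satisfies: ∂•_φ((DΦ_t⁻ᵀ η)∘Φ_t⁻¹) = DΦ_t⁻ᵀ∘Φ_t⁻¹ · (d/dt η)∘Φ_t⁻¹ + (DΦ_t · d/dt(DΦ_t⁻¹ DΦ_t⁻ᵀ) · DΦ_tᵀ)∘Φ_t⁻¹ · (DΦ_t⁻ᵀ η)∘Φ_t⁻¹. -/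
open Matrix Set MeasureTheory

theorem hasDerivAt_matrix_mulVec {𝕜 m n : Type*} [NontriviallyNormedField 𝕜] [Fintype m]
    [Fintype n] {A : 𝕜 → Matrix m n 𝕜} {A' : Matrix m n 𝕜} {v : 𝕜 → n → 𝕜} {v' : n → 𝕜}
    {t : 𝕜} (hA : ∀ i j, HasDerivAt (fun s => A s i j) (A' i j) t) (hv : HasDerivAt v v' t) :
    HasDerivAt (fun s => A s *ᵥ v s) (A' *ᵥ v t + A t *ᵥ v') t := by
  refine hasDerivAt_pi.mpr fun i => ?_
  have hsum := HasDerivAt.fun_sum (u := Finset.univ) fun j _ =>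
    (hA i j).fun_mul (hasDerivAt_pi.mp hv j)
  simpa only [mulVec, dotProduct, Pi.add_apply, Finset.sum_add_distrib] using hsum

theorem Matrix.mulVec_add_inv_mul_inv_transpose_mulVec {n R : Type*} [Fintype n]
    [DecidableEq n] [CommRing R] {J : Matrix n n R} (hJ : IsUnit J.det) (M : Matrix n n R)
    (v w : n → R) :
    J *ᵥ (M *ᵥ v + (J⁻¹ * J⁻¹ᵀ) *ᵥ w) = J⁻¹ᵀ *ᵥ w + (J * M * Jᵀ) *ᵥ (J⁻¹ᵀ *ᵥ v) := by
  have hJt : IsUnit Jᵀ.det := by rwa [det_transpose]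
  rw [mulVec_add, mulVec_mulVec, mulVec_mulVec, mulVec_mulVec, mul_nonsing_inv_cancel_left _ _ hJ,
    transpose_nonsing_inv, mul_nonsing_inv_cancel_right _ _ hJt, add_comm]

theorem piola_material_derivative_covariant_general {d : ℕ} (T : ℝ)
    (Ω₀ : Set (Fin d → ℝ))
    (Φ Ψ : ℝ → (Fin d → ℝ) → (Fin d → ℝ))
    (hΨΦ : ∀ t ∈ Icc (0:ℝ) T, ∀ x ∈ Ω₀, Ψ t (Φ t x) = x)
    (hU : ∀ t ∈ Icc (0:ℝ) T, ∀ x ∈ Ω₀, IsUnit (jacobian (Φ t) x))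
    (η η' : ℝ → (Fin d → ℝ) → (Fin d → ℝ))
    (hη' : ∀ t ∈ Icc (0:ℝ) T, ∀ x ∈ Ω₀, HasDerivAt (fun s => η s x) (η' t x) t)
    -- R' is the time derivative of DΦ_t⁻¹ DΦ_t⁻ᵀ:
    (R' : ℝ → (Fin d → ℝ) → Matrix (Fin d) (Fin d) ℝ)
    (hR' : ∀ t ∈ Icc (0:ℝ) T, ∀ x ∈ Ω₀, ∀ i j,
      HasDerivAt (fun s => ((jacobian (Φ s) x)⁻¹ * ((jacobian (Φ s) x)⁻¹)ᵀ) i j)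
        (R' t x i j) t)
    -- W' is the time derivative of the Piola pullback of (DΦ_t⁻ᵀ η)∘Φ_t⁻¹, which
    -- equals DΦ_t⁻¹ DΦ_t⁻ᵀ η:
    (W' : ℝ → (Fin d → ℝ) → (Fin d → ℝ))
    (hW' : ∀ t ∈ Icc (0:ℝ) T, ∀ x ∈ Ω₀,
      HasDerivAt (fun s => ((jacobian (Φ s) x)⁻¹ * ((jacobian (Φ s) x)⁻¹)ᵀ) *ᵥ (η s x))
        (W' t x) t) :
    ∀ t ∈ Icc (0:ℝ) T, ∀ y ∈ Φ t '' Ω₀,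
      (jacobian (Φ t) (Ψ t y)) *ᵥ (W' t (Ψ t y))
        = ((jacobian (Φ t) (Ψ t y))⁻¹)ᵀ *ᵥ (η' t (Ψ t y))
          + ((jacobian (Φ t) (Ψ t y)) * R' t (Ψ t y) * (jacobian (Φ t) (Ψ t y))ᵀ)
              *ᵥ (((jacobian (Φ t) (Ψ t y))⁻¹)ᵀ *ᵥ (η t (Ψ t y))) := by
  rintro t ht _ ⟨x, hx, rfl⟩
  rw [hΨΦ t ht x hx]
  have hW : W' t x = R' t x *ᵥ η t x
      + ((jacobian (Φ t) x)⁻¹ * ((jacobian (Φ t) x)⁻¹)ᵀ) *ᵥ η' t x :=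
    (hW' t ht x hx).unique (hasDerivAt_matrix_mulVec (hR' t ht x hx) (hη' t ht x hx))
  rw [hW]
  exact mulVec_add_inv_mul_inv_transpose_mulVec
    ((isUnit_iff_isUnit_det _).mp (hU t ht x hx)) _ _ _

/-- Piola material derivative of the covariant pushforward test function:
∂•_φ((DΦ_t⁻ᵀ η)∘Φ_t⁻¹) = DΦ_t⁻ᵀ∘Φ_t⁻¹ (dη/dt)∘Φ_t⁻¹
  + (DΦ_t d/dt(DΦ_t⁻¹DΦ_t⁻ᵀ) DΦ_tᵀ)∘Φ_t⁻¹ (DΦ_t⁻ᵀ η)∘Φ_t⁻¹. -/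
theorem piola_material_derivative_covariant {d : ℕ} (T : ℝ) (hT : 0 < T)
    (Ω₀ : Set (Fin d → ℝ)) (hΩ₀ : IsOpen Ω₀)
    (Φ Ψ : ℝ → (Fin d → ℝ) → (Fin d → ℝ))
    (hΦ0 : ∀ x ∈ Ω₀, Φ 0 x = x)
    (hΨΦ : ∀ t ∈ Icc (0:ℝ) T, ∀ x ∈ Ω₀, Ψ t (Φ t x) = x)
    (hΦΨ : ∀ t ∈ Icc (0:ℝ) T, ∀ y ∈ Φ t '' Ω₀, Φ t (Ψ t y) = y)
    (hΦreg : ContDiff ℝ 2 (fun p : ℝ × (Fin d → ℝ) => Φ p.1 p.2))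
    (hU : ∀ t ∈ Icc (0:ℝ) T, ∀ x ∈ Ω₀, IsUnit (jacobian (Φ t) x))
    (η η' : ℝ → (Fin d → ℝ) → (Fin d → ℝ))
    (hη' : ∀ t ∈ Icc (0:ℝ) T, ∀ x ∈ Ω₀, HasDerivAt (fun s => η s x) (η' t x) t)
    -- R' is the time derivative of DΦ_t⁻¹ DΦ_t⁻ᵀ:
    (R' : ℝ → (Fin d → ℝ) → Matrix (Fin d) (Fin d) ℝ)
    (hR' : ∀ t ∈ Icc (0:ℝ) T, ∀ x ∈ Ω₀, ∀ i j,
      HasDerivAt (fun s => ((jacobian (Φ s) x)⁻¹ * ((jacobian (Φ s) x)⁻¹)ᵀ) i j)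
        (R' t x i j) t)
    -- W' is the time derivative of the Piola pullback of (DΦ_t⁻ᵀ η)∘Φ_t⁻¹, which
    -- equals DΦ_t⁻¹ DΦ_t⁻ᵀ η:
    (W' : ℝ → (Fin d → ℝ) → (Fin d → ℝ))
    (hW' : ∀ t ∈ Icc (0:ℝ) T, ∀ x ∈ Ω₀,
      HasDerivAt (fun s => ((jacobian (Φ s) x)⁻¹ * ((jacobian (Φ s) x)⁻¹)ᵀ) *ᵥ (η s x))
        (W' t x) t) :
    ∀ t ∈ Icc (0:ℝ) T, ∀ y ∈ Φ t '' Ω₀,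
      (jacobian (Φ t) (Ψ t y)) *ᵥ (W' t (Ψ t y))
        = ((jacobian (Φ t) (Ψ t y))⁻¹)ᵀ *ᵥ (η' t (Ψ t y))
          + ((jacobian (Φ t) (Ψ t y)) * R' t (Ψ t y) * (jacobian (Φ t) (Ψ t y))ᵀ)
              *ᵥ (((jacobian (Φ t) (Ψ t y))⁻¹)ᵀ *ᵥ (η t (Ψ t y))) :=
  piola_material_derivative_covariant_general T Ω₀ Φ Ψ hΨΦ hU η η' hη' R' hR' W' hW'
end
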